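/- arXiv:2206.09662 — 3 statements merged into one kernel-verified Lean document; each statement's English description precedes it below -/
import Mathlib

section
/- Let G be a multigraph and f a divisor on G. If there is a legal game starting from f in which every vertex of G fires at least once, then f is a non-halting divisor. -/
variable {V : Type*} [Fintype V] [DecidableEq V]

/-- The degree of vertex `v` in the multigraph with edge-multiplicity function `m`. -/
def mgDeg (m : V → V → ℕ) (v : V) : ℕ := ∑ u, m v u

/-- The divisor obtained from `f` by firing vertex `v`. -/
def mgFire (m : V → V → ℕ) (f : V → ℤ) (v : V) : V → ℤ :=
  fun u => if u = v then f v - mgDeg m v else f u + m v u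

/-- The divisor obtained from `f` by firing the vertices of `L` in order. -/
def mgPlay (m : V → V → ℕ) (f : V → ℤ) (L : List V) : V → ℤ :=
  L.foldl (mgFire m) f

/-- `L` is a legal game from `f`: each fired vertex is active when fired. -/
def mgLegal (m : V → V → ℕ) : (V → ℤ) → List V → Prop
  | _, [] => True
  | f, v :: L => ((mgDeg m v : ℤ) ≤ f v) ∧ mgLegal m (mgFire m f v) L

/-- A divisor is stable if no vertex is active. -/
def mgStable (m : V → V → ℕ) (f : V → ℤ) : Prop := ∀ v, f v < (mgDeg m v : ℤ)

/-- A divisor is halting if some legal game from it ends at a stable divisor. -/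
def mgHalting (m : V → V → ℕ) (f : V → ℤ) : Prop :=
  ∃ L : List V, mgLegal m f L ∧ mgStable m (mgPlay m f L)

/-- A divisor is recurrent if some non-empty legal game from it leads back to it. -/
def mgRecurrent (m : V → V → ℕ) (f : V → ℤ) : Prop :=
  ∃ L : List V, L ≠ [] ∧ mgLegal m f L ∧ mgPlay m f L = f

/-- A divisor is effective if it is nonnegative everywhere. -/
def mgEffective (f : V → ℤ) : Prop := ∀ v, 0 ≤ f v

/-- The degree of a divisor. -/
def mgDegDiv (f : V → ℤ) : ℤ := ∑ v, f v

/-- Distance of a divisor from a recurrent state. -/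
noncomputable def mgDistRec (m : V → V → ℕ) (f : V → ℤ) : ℕ :=
  sInf {n : ℕ | ∃ g : V → ℤ, mgEffective g ∧ mgDegDiv g = (n : ℤ) ∧ mgRecurrent m (f + g)}

/-- Distance of a divisor from a non-halting state. -/
noncomputable def mgDistNonhalt (m : V → V → ℕ) (f : V → ℤ) : ℕ :=
  sInf {n : ℕ | ∃ g : V → ℤ, mgEffective g ∧ mgDegDiv g = (n : ℤ) ∧ ¬ mgHalting m (f + g)}

/-- A multigraph is connected if any two vertices are joined by a path of
positive-multiplicity edges. -/
def mgConnected (m : V → V → ℕ) : Prop :=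
  ∀ u v : V, Relation.ReflTransGen (fun a b => 0 < m a b) u v

/-- `f` and `g` are linearly equivalent: `f` can be transformed to `g` by firings. -/
def mgLinEquiv (m : V → V → ℕ) (f g : V → ℤ) : Prop :=
  ∃ L : List V, mgPlay m f L = g

/-- A divisor is winnable if it is linearly equivalent to an effective divisor. -/
def mgWinnable (m : V → V → ℕ) (f : V → ℤ) : Prop :=
  ∃ g : V → ℤ, mgEffective g ∧ mgLinEquiv m f g

/-- The rank of a divisor. -/
noncomputable def mgRank (m : V → V → ℕ) (f : V → ℤ) : ℤ :=
  ((sInf {n : ℕ | ∃ g : V → ℤ, mgEffective g ∧ mgDegDiv g = (n : ℤ) ∧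
    ¬ mgWinnable m (f - g)} : ℕ) : ℤ) - 1

/-!
Every vertex fired in a legal game is fired in every legal game that reaches a stable divisor:
a vertex that never fires only gains chips, and an active vertex that is fired later may be
fired first instead. So a stabilising game from `f` would fire every vertex. Let `v` be the
vertex whose last firing comes earliest: it holds at least `deg v` chips before that firing,
and afterwards each of its neighbours fires, returning all `deg v` chips, so `v` ends active.
-/

open Finset

theorem List.exists_eq_append_cons_of_forall_mem {α : Type*} [Nonempty α] :
    ∀ {M : List α}, (∀ u, u ∈ M) → ∃ A v B, M = A ++ v :: B ∧ v ∉ B ∧ ∀ u, u ≠ v → u ∈ B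
  | [], h => absurd (h (Classical.arbitrary α)) List.not_mem_nil
  | x :: M, h => by
    by_cases hM : ∀ u, u ∈ M
    · obtain ⟨A, v, B, rfl, hvB, hB⟩ := List.exists_eq_append_cons_of_forall_mem hM
      exact ⟨x :: A, v, B, rfl, hvB, hB⟩
    · obtain ⟨u, hu⟩ := not_forall.1 hM
      obtain rfl : u = x := (List.mem_cons.1 (h u)).resolve_right hu
      exact ⟨[], u, M, rfl, hu, fun w hw => (List.mem_cons.1 (h w)).resolve_left hw⟩

def mgFireDelta (m : V → V → ℕ) (v u : V) : ℤ := if u = v then -(mgDeg m v : ℤ) else m v u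

section Firing

variable (m : V → V → ℕ)

theorem mgFireDelta_nonneg {v u : V} (h : u ≠ v) : 0 ≤ mgFireDelta m v u := by
  simp [mgFireDelta, h]

theorem mgFire_apply (f : V → ℤ) (v u : V) : mgFire m f v u = f u + mgFireDelta m v u := by
  unfold mgFire mgFireDelta
  split_ifs with h
  · subst h; ring
  · rfl

theorem mgPlay_cons (f : V → ℤ) (v : V) (L : List V) :
    mgPlay m f (v :: L) = mgPlay m (mgFire m f v) L := rfl

theorem mgPlay_append (f : V → ℤ) (A B : List V) :
    mgPlay m f (A ++ B) = mgPlay m (mgPlay m f A) B := List.foldl_append ..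

theorem mgPlay_apply (f : V → ℤ) (L : List V) (u : V) :
    mgPlay m f L u = f u + (L.map (mgFireDelta m · u)).sum := by
  induction L generalizing f with
  | nil => simp [mgPlay]
  | cons v L ih =>
    rw [mgPlay_cons, ih, mgFire_apply, List.map_cons, List.sum_cons]
    ring

theorem mgPlay_perm (f : V → ℤ) {A B : List V} (h : A.Perm B) : mgPlay m f A = mgPlay m f B := by
  funext u
  rw [mgPlay_apply, mgPlay_apply, (h.map _).sum_eq]

theorem le_mgPlay_of_notMem {f : V → ℤ} {L : List V} {v : V} (hv : v ∉ L) :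
    f v ≤ mgPlay m f L v := by
  rw [mgPlay_apply, le_add_iff_nonneg_right]
  refine List.sum_nonneg fun d hd => ?_
  obtain ⟨x, hx, rfl⟩ := List.mem_map.1 hd
  exact mgFireDelta_nonneg m (ne_of_mem_of_not_mem hx hv).symm

theorem mgLegal_mono : ∀ {L : List V} {f g : V → ℤ},
    (∀ u ∈ L, f u ≤ g u) → mgLegal m f L → mgLegal m g L
  | [], _, _, _, _ => trivial
  | v :: L, f, g, hle, ⟨hv, hL⟩ => by
    refine ⟨hv.trans (hle v List.mem_cons_self), mgLegal_mono (fun u hu => ?_) hL⟩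
    rw [mgFire_apply, mgFire_apply]
    exact add_le_add_left (hle u (List.mem_cons_of_mem v hu)) _

theorem mgLegal_append : ∀ (A B : List V) (f : V → ℤ),
    mgLegal m f (A ++ B) ↔ mgLegal m f A ∧ mgLegal m (mgPlay m f A) B
  | [], B, f => by simp [mgLegal, mgPlay]
  | v :: A, B, f => by
    change (_ ∧ mgLegal m _ (A ++ B)) ↔ (_ ∧ mgLegal m _ A) ∧ _
    rw [mgLegal_append A B, mgPlay_cons, and_assoc]

theorem mgLegal_fire_first {f : V → ℤ} {A B : List V} {v : V} (hvA : v ∉ A)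
    (h : mgLegal m f (A ++ v :: B)) : mgLegal m (mgFire m f v) (A ++ B) := by
  obtain ⟨hA, -, hB⟩ := (mgLegal_append m A (v :: B) f).1 h
  have hA' : mgLegal m (mgFire m f v) A := by
    refine mgLegal_mono m (fun u hu => ?_) hA
    rw [mgFire_apply, le_add_iff_nonneg_right]
    exact mgFireDelta_nonneg m (ne_of_mem_of_not_mem hu hvA)
  have hcomm : mgPlay m (mgFire m f v) A = mgFire m (mgPlay m f A) v := by
    rw [← mgPlay_cons, mgPlay_perm m f (List.perm_append_singleton v A).symm, mgPlay_append]
    rfl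
  exact (mgLegal_append m A B _).2 ⟨hA', hcomm ▸ hB⟩

theorem subset_of_mgLegal_of_mgStable : ∀ {L : List V} {f : V → ℤ} {M : List V},
    mgLegal m f L → mgLegal m f M → mgStable m (mgPlay m f M) → L ⊆ M
  | [], _, _, _, _, _ => List.nil_subset _
  | v :: L, f, M, ⟨hv, hL⟩, hM, hst => by
    have hvM : v ∈ M := by
      by_contra hvM
      exact (hst v).not_ge (hv.trans (le_mgPlay_of_notMem m hvM))
    obtain ⟨A, B, rfl, hvA⟩ := List.eq_append_cons_of_mem hvM
    have hplay : mgPlay m (mgFire m f v) (A ++ B) = mgPlay m f (A ++ v :: B) :=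
      mgPlay_perm m f List.perm_middle.symm
    have hLAB : L ⊆ A ++ B := subset_of_mgLegal_of_mgStable hL (mgLegal_fire_first m hvA hM)
      (hplay ▸ hst)
    exact List.Subset.trans (List.cons_subset_cons v hLAB) List.perm_middle.symm.subset

theorem mgDeg_le_sum_of_forall_mem (hsymm : ∀ u v, m u v = m v u) (hloop : ∀ v, m v v = 0)
    {v : V} {B : List V} (hB : ∀ u, u ≠ v → u ∈ B) : mgDeg m v ≤ (B.map (m · v)).sum :=
  calc mgDeg m v = ∑ u ∈ univ.erase v, m u v := by
        rw [mgDeg, ← sum_erase _ (hloop v)]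
        exact sum_congr rfl fun u _ => hsymm v u
    _ ≤ ∑ u ∈ B.toFinset, m u v :=
        sum_le_sum_of_subset fun u hu => List.mem_toFinset.2 (hB u (ne_of_mem_erase hu))
    _ ≤ (B.map (m · v)).sum := by
        rw [sum_list_map_count]
        refine sum_le_sum fun u hu => ?_
        rw [smul_eq_mul]
        exact Nat.le_mul_of_pos_left _ (List.count_pos_iff.2 (List.mem_toFinset.1 hu))

theorem mgDeg_le_mgPlay_cons (hsymm : ∀ u v, m u v = m v u) (hloop : ∀ v, m v v = 0)
    {f : V → ℤ} {v : V} {B : List V} (hv : (mgDeg m v : ℤ) ≤ f v) (hvB : v ∉ B)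
    (hB : ∀ u, u ≠ v → u ∈ B) : (mgDeg m v : ℤ) ≤ mgPlay m f (v :: B) v := by
  have hreturn : (B.map (mgFireDelta m · v)).sum = ((B.map (m · v)).sum : ℕ) := by
    rw [Nat.cast_list_sum, List.map_map]
    refine congrArg List.sum (List.map_congr_left fun x hx => ?_)
    simp [mgFireDelta, (ne_of_mem_of_not_mem hx hvB).symm]
  have hdeg := mgDeg_le_sum_of_forall_mem m hsymm hloop hB
  rw [mgPlay_cons, mgPlay_apply, mgFire_apply, hreturn]
  simp only [mgFireDelta, if_pos]
  omega

end Firing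

/-- If there is a legal game from `f` in which every vertex fires at least once,
then `f` is non-halting. -/
theorem stmt2 [Nonempty V] (m : V → V → ℕ) (hsymm : ∀ u v, m u v = m v u)
    (hloop : ∀ v, m v v = 0) (f : V → ℤ) (L : List V)
    (hL : mgLegal m f L) (hall : ∀ v : V, v ∈ L) :
    ¬ mgHalting m f := by
  rintro ⟨M, hM, hst⟩
  have hallM : ∀ v, v ∈ M := fun v => subset_of_mgLegal_of_mgStable m hL hM hst (hall v)
  obtain ⟨A, v, B, rfl, hvB, hB⟩ := List.exists_eq_append_cons_of_forall_mem hallM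
  have hv : (mgDeg m v : ℤ) ≤ mgPlay m f A v := ((mgLegal_append m A _ f).1 hM).2.1
  have hactive := mgDeg_le_mgPlay_cons m hsymm hloop hv hvB hB
  rw [← mgPlay_append] at hactive
  exact (hst v).not_ge hactive
end

section
/- Let G be a connected multigraph and f a divisor on G. Then rank_G(f) = dist_nonhalt_G(d_G − 1 − f) − 1, where d_G − 1 − f denotes the divisor whose value at each vertex v is d_G(v) − 1 − f(v). -/
variable {V : Type*} [Fintype V] [DecidableEq V]

section MGAux

set_option linter.unusedSectionVars false

variable {V : Type*} [Fintype V] [DecidableEq V]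

/-- The (integer) Laplacian applied to a firing-count vector `c`. -/
def mgLap (m : V → V → ℕ) (c : V → ℤ) (u : V) : ℤ :=
  c u * mgDeg m u - ∑ w, c w * m w u

lemma mgLap_sub (m : V → V → ℕ) (a b : V → ℤ) (u : V) :
    mgLap m (fun w => a w - b w) u = mgLap m a u - mgLap m b u := by
  simp only [mgLap, sub_mul, Finset.sum_sub_distrib]; ring

lemma mgLap_add (m : V → V → ℕ) (a b : V → ℤ) (u : V) :
    mgLap m (fun w => a w + b w) u = mgLap m a u + mgLap m b u := by
  simp only [mgLap, add_mul, Finset.sum_add_distrib]; ring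

lemma mgLap_single (m : V → V → ℕ) (hloop : ∀ v, m v v = 0) (v u : V) :
    mgLap m (fun w => if w = v then 1 else 0) u
      = (if u = v then (mgDeg m v : ℤ) else 0) - m v u := by
  simp only [mgLap, ite_mul, one_mul, zero_mul]
  rw [Finset.sum_ite_eq' Finset.univ v (fun w => (m w u : ℤ))]
  by_cases h : u = v <;> simp [h, hloop]

lemma mgLap_const (m : V → V → ℕ) (hsymm : ∀ u v, m u v = m v u) (C : ℤ) (u : V) :
    mgLap m (fun _ => C) u = 0 := by
  simp only [mgLap, ← Finset.mul_sum]
  have h : ∑ w, (m w u : ℤ) = (mgDeg m u : ℤ) := by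
    rw [mgDeg]
    push_cast
    exact Finset.sum_congr rfl fun w _ => by rw [hsymm]
  rw [h]; ring

lemma mgFire_eq (m : V → V → ℕ) (hloop : ∀ v, m v v = 0) (f : V → ℤ) (v : V) :
    mgFire m f v = fun u => f u - mgLap m (fun w => if w = v then 1 else 0) u := by
  funext u
  rw [mgLap_single m hloop]
  by_cases h : u = v <;> simp [mgFire, h, hloop]

lemma mgPlay_eq (m : V → V → ℕ) (hloop : ∀ v, m v v = 0) (L : List V) (f : V → ℤ) :
    mgPlay m f L = fun u => f u - mgLap m (fun v => (L.count v : ℤ)) u := by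
  induction L generalizing f with
  | nil =>
    funext u
    simp [mgPlay, mgLap]
  | cons v L ih =>
    have h1 : mgPlay m f (v :: L) = mgPlay m (mgFire m f v) L := rfl
    rw [h1, ih]
    funext u
    rw [mgFire_eq m hloop]
    have hc : (fun w => ((v :: L).count w : ℤ))
        = fun w => ((L.count w : ℤ)) + (if w = v then 1 else 0) := by
      funext w
      rw [List.count_cons]
      by_cases h : w = v
      · subst h; simp
      · simp [h, Ne.symm h]
    rw [hc, mgLap_add]
    ring

lemma mg_exists_list_count (c : V → ℕ) : ∃ L : List V, ∀ v, L.count v = c v := by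
  classical
  refine ⟨(∑ v : V, Multiset.replicate (c v) v).toList, fun v => ?_⟩
  have h1 : ∀ M : Multiset V, M.toList.count v = M.count v := fun M => by
    rw [← Multiset.coe_count, M.coe_toList]
  rw [h1, Multiset.count_sum']
  simp [Multiset.count_replicate]

lemma mg_halts_aux (m : V → V → ℕ) (hloop : ∀ v, m v v = 0)
    (e : V → ℤ) (he : ∀ v, 0 ≤ e v) :
    ∀ N : ℕ, ∀ c' : V → ℤ, (∀ v, 0 ≤ c' v) → (∑ v, c' v) ≤ (N : ℤ) →
      mgHalting m (fun v => (mgDeg m v : ℤ) - 1 - e v + mgLap m c' v) := by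
  intro N
  induction N with
  | zero =>
    intro c' hc hsum
    refine ⟨[], trivial, ?_⟩
    intro v
    have hc0 : ∀ w, c' w = 0 := by
      intro w
      have h1 : c' w ≤ ∑ v, c' v :=
        Finset.single_le_sum (fun i _ => hc i) (Finset.mem_univ w)
      have := hc w
      push_cast at hsum
      linarith
    have hl : mgLap m c' v = 0 := by simp [mgLap, hc0]
    show mgPlay m _ [] v < (mgDeg m v : ℤ)
    have : mgPlay m (fun v => (mgDeg m v : ℤ) - 1 - e v + mgLap m c' v) [] v
        = (mgDeg m v : ℤ) - 1 - e v + mgLap m c' v := rfl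
    rw [this, hl]
    linarith [he v]
  | succ N ih =>
    intro c' hc hsum
    by_cases hst : mgStable m (fun v => (mgDeg m v : ℤ) - 1 - e v + mgLap m c' v)
    · exact ⟨[], trivial, hst⟩
    · rw [mgStable] at hst
      push_neg at hst
      obtain ⟨v, hv⟩ := hst
      have hlapv : 1 ≤ mgLap m c' v := by
        have h2 := he v
        linarith
      have hcv : 1 ≤ c' v := by
        by_contra hcon
        push_neg at hcon
        have h0 : c' v = 0 := le_antisymm (by linarith) (hc v)
        have h3 : 0 ≤ ∑ w, c' w * m w v :=
          Finset.sum_nonneg fun w _ => mul_nonneg (hc w) (by positivity)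
        have h4 : mgLap m c' v ≤ 0 := by
          rw [mgLap, h0]
          linarith
        linarith
      set c'' : V → ℤ := fun w => c' w - (if w = v then 1 else 0) with hc''def
      have hc'' : ∀ w, 0 ≤ c'' w := by
        intro w
        show 0 ≤ c' w - if w = v then 1 else 0
        by_cases h : w = v
        · rw [if_pos h, h]; linarith
        · rw [if_neg h]; linarith [hc w]
      have hsum'' : (∑ w, c'' w) ≤ (N : ℤ) := by
        have h5 : ∑ w, c'' w = (∑ w, c' w) - 1 := by
          simp [hc''def, Finset.sum_sub_distrib]
        push_cast at hsum
        linarith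
      obtain ⟨L, hleg, hstab⟩ := ih c'' hc'' hsum''
      have hfire : mgFire m (fun v => (mgDeg m v : ℤ) - 1 - e v + mgLap m c' v) v
          = fun u => (mgDeg m u : ℤ) - 1 - e u + mgLap m c'' u := by
        rw [mgFire_eq m hloop]
        funext u
        have h6 : mgLap m c'' u
            = mgLap m c' u - mgLap m (fun w => if w = v then 1 else 0) u :=
          mgLap_sub m c' (fun w => if w = v then 1 else 0) u
        rw [h6]
        ring
      refine ⟨v :: L, ⟨hv, ?_⟩, ?_⟩
      · rw [hfire]; exact hleg
      · show mgStable m (mgPlay m (mgFire m _ v) L)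
        rw [hfire]; exact hstab

theorem mgWinnable_iff_halting (m : V → V → ℕ) (hsymm : ∀ u v, m u v = m v u)
    (hloop : ∀ v, m v v = 0) (f : V → ℤ) :
    mgWinnable m f ↔ mgHalting m (fun v => (mgDeg m v : ℤ) - 1 - f v) := by
  constructor
  · rintro ⟨g, hg, L, hL⟩
    rw [mgPlay_eq m hloop] at hL
    set x : V → ℤ := fun v => (L.count v : ℤ) with hxdef
    have hx : ∀ v, 0 ≤ x v := fun v => Int.natCast_nonneg _
    set C : ℤ := ∑ v, x v with hCdef
    set c' : V → ℤ := fun v => C - x v with hc'def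
    have hc' : ∀ v, 0 ≤ c' v := fun v =>
      sub_nonneg.2 (Finset.single_le_sum (fun i _ => hx i) (Finset.mem_univ v))
    have key : (fun v => (mgDeg m v : ℤ) - 1 - f v)
        = fun v => (mgDeg m v : ℤ) - 1 - g v + mgLap m c' v := by
      funext v
      have h1 : f v - mgLap m x v = g v := congrFun hL v
      have h2 : mgLap m c' v = mgLap m (fun _ => C) v - mgLap m x v :=
        mgLap_sub m (fun _ => C) x v
      rw [mgLap_const m hsymm] at h2
      linarith
    rw [key]
    have hCnn : 0 ≤ ∑ v, c' v := Finset.sum_nonneg fun v _ => hc' v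
    exact mg_halts_aux m hloop g hg (∑ v, c' v).toNat c' hc'
      (by rw [Int.toNat_of_nonneg hCnn])
  · rintro ⟨L, -, hstab⟩
    rw [mgPlay_eq m hloop] at hstab
    set C : ℕ := ∑ v, L.count v with hCdef
    have hle : ∀ u, L.count u ≤ C := fun u =>
      Finset.single_le_sum (fun i (_ : i ∈ Finset.univ) => Nat.zero_le (L.count i))
        (Finset.mem_univ u)
    obtain ⟨L', hL'⟩ := mg_exists_list_count (fun v => C - L.count v)
    refine ⟨mgPlay m f L', ?_, ⟨L', rfl⟩⟩
    rw [mgPlay_eq m hloop]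
    intro u
    have hcnt : (fun v => (L'.count v : ℤ)) = fun v => (C : ℤ) - (L.count v : ℤ) := by
      funext v
      rw [hL' v, Nat.cast_sub (hle v)]
    have h7 : mgLap m (fun v => (L'.count v : ℤ)) u
        = mgLap m (fun _ => (C : ℤ)) u - mgLap m (fun v => (L.count v : ℤ)) u := by
      rw [hcnt]
      exact mgLap_sub m (fun _ => (C : ℤ)) (fun v => (L.count v : ℤ)) u
    have hs : (mgDeg m u : ℤ) - 1 - f u - mgLap m (fun v => (L.count v : ℤ)) u
        < (mgDeg m u : ℤ) := hstab u
    show 0 ≤ f u - mgLap m (fun v => (L'.count v : ℤ)) u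
    rw [h7, mgLap_const m hsymm]
    linarith

end MGAux

/-- `rank_G(f) = dist_nonhalt_G(d_G - 1 - f) - 1` for a divisor `f` on a
connected multigraph `G`. -/
theorem stmt7 [Nonempty V] (m : V → V → ℕ) (hsymm : ∀ u v, m u v = m v u)
    (hloop : ∀ v, m v v = 0) (hconn : mgConnected m) (f : V → ℤ) :
    mgRank m f =
      (mgDistNonhalt m (fun v => (mgDeg m v : ℤ) - 1 - f v) : ℤ) - 1 := by
  have key : ∀ g : V → ℤ, mgWinnable m (f - g) ↔
      mgHalting m ((fun v => (mgDeg m v : ℤ) - 1 - f v) + g) := by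
    intro g
    have hfun : ((fun v => (mgDeg m v : ℤ) - 1 - f v) + g)
        = fun v => (mgDeg m v : ℤ) - 1 - (f - g) v := by
      funext v
      simp only [Pi.add_apply, Pi.sub_apply]
      ring
    rw [hfun]
    exact mgWinnable_iff_halting m hsymm hloop (f - g)
  have hset : {n : ℕ | ∃ g : V → ℤ, mgEffective g ∧ mgDegDiv g = (n : ℤ) ∧
        ¬ mgWinnable m (f - g)}
      = {n : ℕ | ∃ g : V → ℤ, mgEffective g ∧ mgDegDiv g = (n : ℤ) ∧
        ¬ mgHalting m ((fun v => (mgDeg m v : ℤ) - 1 - f v) + g)} := by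
    ext n
    simp only [Set.mem_setOf_eq]
    constructor
    · rintro ⟨g, h1, h2, h3⟩
      exact ⟨g, h1, h2, fun hh => h3 ((key g).mpr hh)⟩
    · rintro ⟨g, h1, h2, h3⟩
      exact ⟨g, h1, h2, fun hw => h3 ((key g).mp hw)⟩
  rw [mgRank, mgDistNonhalt, hset]
end

section
/- Let G = (V, E) be a finite connected simple graph and τ : V → ℕ a threshold function with τ(v) ≤ d_G(v) for every v ∈ V, and let G' and x be the multigraph and divisor of the standard construction. Then ts_G(τ) = dist_rec_{G'}(x). -/
variable {V : Type*} [Fintype V] [DecidableEq V]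

/-- One round of the activation process: every vertex with at least `τ v`
active neighbors becomes active (and active vertices stay active). -/
def tssStep (G : SimpleGraph V) [DecidableRel G.Adj] (τ : V → ℕ) (A : Finset V) : Finset V :=
  A ∪ Finset.univ.filter (fun v => τ v ≤ (A.filter (fun u => G.Adj v u)).card)

/-- `S` is a target set: the activation process starting from `S` eventually
activates all vertices. -/
def tssIsTargetSet (G : SimpleGraph V) [DecidableRel G.Adj] (τ : V → ℕ) (S : Finset V) : Prop :=
  ∃ n : ℕ, (tssStep G τ)^[n] S = Finset.univ

/-- Minimum cardinality of a target set. -/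
noncomputable def tssMin (G : SimpleGraph V) [DecidableRel G.Adj] (τ : V → ℕ) : ℕ :=
  sInf {k : ℕ | ∃ S : Finset V, tssIsTargetSet G τ S ∧ S.card = k}

/-- Auxiliary (one-directional) edge multiplicities of the standard construction.
In the vertex type `(V ⊕ V ⊕ V) ⊕ G.Dart`, the first, second and third summands
of `V ⊕ V ⊕ V` encode `v_i`, `v_c`, `v_o` respectively, and a dart `d = (u, v)`
encodes the vertex `p_{uv}`. -/
def consAux (G : SimpleGraph V) [DecidableRel G.Adj] (N : ℕ) :
    (V ⊕ V ⊕ V) ⊕ G.Dart → (V ⊕ V ⊕ V) ⊕ G.Dart → ℕ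
  | Sum.inl (Sum.inl v), Sum.inl (Sum.inr (Sum.inl w)) => if v = w then N else 0
  | Sum.inl (Sum.inr (Sum.inl v)), Sum.inl (Sum.inr (Sum.inr w)) => if v = w then 1 else 0
  | Sum.inl (Sum.inr (Sum.inr v)), Sum.inr d => if d.toProd.1 = v then N else 0
  | Sum.inr d, Sum.inl (Sum.inl v) => if d.toProd.2 = v then 1 else 0
  | _, _ => 0

/-- Edge-multiplicity function of the multigraph `G'` of the standard construction:
`N` parallel edges between `v_i` and `v_c`, one edge between `v_c` and `v_o`, and,
for each edge `uv` of `G`, `N` parallel edges between `u_o` and `p_{uv}` and one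
edge between `p_{uv}` and `v_i`. -/
def consM (G : SimpleGraph V) [DecidableRel G.Adj] (N : ℕ)
    (a b : (V ⊕ V ⊕ V) ⊕ G.Dart) : ℕ :=
  consAux G N a b + consAux G N b a

/-- The divisor `x` of the standard construction: `x(v_i) = d_G(v) + N - τ(v)`,
`x(v_c) = 1`, `x(v_o) = N * d_G(v)`, and `x(p) = 1` for every vertex `p_{uv}`. -/
def consX (G : SimpleGraph V) [DecidableRel G.Adj] (τ : V → ℕ) (N : ℕ) :
    (V ⊕ V ⊕ V) ⊕ G.Dart → ℤ
  | Sum.inl (Sum.inl v) => (G.degree v : ℤ) + N - τ v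
  | Sum.inl (Sum.inr (Sum.inl _)) => 1
  | Sum.inl (Sum.inr (Sum.inr v)) => (N : ℤ) * G.degree v
  | Sum.inr _ => 1

/-!
Recurrence is characterised by firing orders. On a loopless symmetric multigraph, `f` is recurrent
as soon as the vertices can be ordered, with ties only between non-adjacent vertices, so that each
vertex holds at least as many chips as it has edges to later vertices: firing every vertex once in
this order is legal and returns to `f`. Conversely, if the multigraph is connected then every vertex
fires in a recurrent game, and ordering the vertices by their last firing gives such an order.

In `G'`, the gadget `v_i, v_c, v_o, p_{vu}` of a vertex `v` that carries no chip of `g` can only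
fire in the order `v_i, v_c, v_o, p_{vu}`: `v_c` and `p_{vu}` hold one chip, so they cannot precede
a neighbour joined to them by `N ≥ 2` edges, and once the darts follow `v_o`, its `N d(v)` chips
leave no room for `v_c` after it. Then `v_i` needs `τ v` of the darts `p_{uv}` to fire before it. So
if `x + g` is recurrent, the vertices whose gadgets carry chips of `g` form a target set, activated
in the order in which the `v_i` fire. Conversely, given a target set `S` with activation times, one
extra chip on `v_o` for each `v ∈ S` lets these gadgets fire `v_o` and their darts first and
`v_i`, `v_c` last, while every other gadget fires in the round in which its vertex is activated.
-/

open Finset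

section ChipFiring

variable (m : V → V → ℕ)

def mgLaterDeg (t : V → ℕ) (v : V) : ℤ := ∑ u with t v < t u, (m u v : ℤ)

-- Vertices with equal `t` are non-adjacent, so the order in which they fire is irrelevant.
def mgIsFiringOrder (f : V → ℤ) (t : V → ℕ) : Prop :=
  (∀ u v, 0 < m u v → t u ≠ t v) ∧ ∀ v, mgLaterDeg m t v ≤ f v

lemma mgPlay_apply_s11 (hdiag : ∀ v, m v v = 0) (f : V → ℤ) (L : List V) (v : V) :
    mgPlay m f L v = f v + ∑ u, (L.count u : ℤ) * m u v - L.count v * mgDeg m v := by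
  induction L generalizing f with
  | nil => simp [mgPlay]
  | cons a L ih =>
    rw [show mgPlay m f (a :: L) = mgPlay m (mgFire m f a) L from rfl, ih]
    simp only [mgFire, List.count_cons, beq_iff_eq, Nat.cast_add, Nat.cast_ite, Nat.cast_one,
      Nat.cast_zero, add_mul, sum_add_distrib, ite_mul, one_mul, zero_mul]
    by_cases h : v = a
    · subst h
      simp only [↓reduceIte, sum_ite_eq, mem_univ, hdiag, CharP.cast_eq_zero, add_zero]
      ring
    · simp only [h, Ne.symm h, ↓reduceIte, sum_ite_eq, mem_univ, add_zero]
      ring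

lemma mgLegal_iff (f : V → ℤ) (L : List V) :
    mgLegal m f L ↔ ∀ P v Q, L = P ++ v :: Q → (mgDeg m v : ℤ) ≤ mgPlay m f P v := by
  induction L generalizing f with
  | nil => simp [mgLegal]
  | cons a L ih =>
    simp only [mgLegal, ih]
    constructor
    · rintro ⟨ha, hL⟩ (_ | ⟨b, P⟩) v Q h
      · obtain ⟨rfl, rfl⟩ := List.cons_eq_cons.1 h
        exact ha
      · obtain ⟨rfl, rfl⟩ := List.cons_eq_cons.1 h
        exact hL P v Q rfl
    · intro h
      exact ⟨h [] a L rfl, fun P v Q hL => h (a :: P) v Q (by rw [hL]; rfl)⟩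

lemma sum_count_mul_le_mgPlay (hdiag : ∀ v, m v v = 0) {f : V → ℤ} {P Q : List V} {v : V}
    (hleg : mgLegal m f (P ++ v :: Q)) (hv : v ∉ Q) :
    ∑ u, (Q.count u : ℤ) * m u v ≤ mgPlay m f (P ++ v :: Q) v := by
  have hfire := (mgLegal_iff m f _).1 hleg P v Q rfl
  have hsplit : mgPlay m f (P ++ v :: Q) = mgPlay m (mgFire m (mgPlay m f P) v) Q :=
    List.foldl_append ..
  rw [hsplit, mgPlay_apply_s11 m hdiag, List.count_eq_zero.2 hv]
  simp only [mgFire, if_true, Nat.cast_zero, zero_mul, sub_zero]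
  linarith

lemma mem_of_mgPlay_eq_self (hdiag : ∀ v, m v v = 0) (hconn : mgConnected m) {f : V → ℤ}
    {L : List V} (hL : L ≠ []) (hplay : mgPlay m f L = f) (v : V) : v ∈ L := by
  -- a vertex that never fires gains a chip from every firing neighbour
  have closed : ∀ a b, 0 < m a b → a ∈ L → b ∈ L := by
    intro a b hab ha
    by_contra hb
    have hzero : ∑ u, (L.count u : ℤ) * m u b = 0 := by
      have := congrFun hplay b
      rw [mgPlay_apply_s11 m hdiag, List.count_eq_zero.2 hb] at this
      simpa using this
    have := (sum_eq_zero_iff_of_nonneg (fun u _ => by positivity)).1 hzero a (mem_univ a)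
    simp only [mul_eq_zero, Nat.cast_eq_zero, List.count_eq_zero] at this
    exact this.elim (· ha) hab.ne'
  obtain ⟨a, L', rfl⟩ := List.exists_cons_of_ne_nil hL
  induction hconn a v with
  | refl => exact List.mem_cons_self
  | tail _ hbc ih => exact closed _ _ hbc ih

lemma exists_mgIsFiringOrder_of_mgRecurrent (hdiag : ∀ v, m v v = 0) (hconn : mgConnected m)
    {f : V → ℤ} (hrec : mgRecurrent m f) : ∃ t, mgIsFiringOrder m f t := by
  obtain ⟨L, hne, hleg, hplay⟩ := hrec
  have last_occ : ∀ v, ∃ P Q, L = P ++ v :: Q ∧ v ∉ Q := fun v => by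
    obtain ⟨Q, P, h, hv⟩ := List.eq_append_cons_of_mem
      (List.mem_reverse.2 (mem_of_mgPlay_eq_self m hdiag hconn hne hplay v))
    exact ⟨P.reverse, Q.reverse, by simpa using congrArg List.reverse h, by simpa using hv⟩
  choose P Q hPQ hvQ using last_occ
  -- `t v := (P v).length` is the position of the last firing of `v`
  have hget : ∀ v, L[(P v).length]? = some v := fun v => by rw [hPQ v]; simp
  have hlater : ∀ u v, (P v).length < (P u).length → u ∈ Q v := by
    intro u v h
    obtain ⟨k, hk⟩ := Nat.exists_eq_add_of_lt h
    have := hget u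
    rw [hPQ v, List.getElem?_append_right h.le, hk] at this
    rw [show (P v).length + k + 1 - (P v).length = k + 1 by omega] at this
    exact List.mem_of_getElem? this
  refine ⟨fun v => (P v).length, fun u v huv h => ?_, fun v => ?_⟩
  · obtain rfl : u = v := by simpa using (hget u).symm.trans ((congrArg (L[·]?) h).trans (hget v))
    simp [hdiag] at huv
  · calc mgLaterDeg m (fun v => (P v).length) v
        ≤ ∑ u, ((Q v).count u : ℤ) * m u v := by
          rw [mgLaterDeg, sum_filter]
          refine sum_le_sum fun u _ => ?_
          split_ifs with h
          · exact le_mul_of_one_le_left (by positivity)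
              (by exact_mod_cast List.count_pos_iff.2 (hlater u v h))
          · positivity
      _ ≤ f v := by
          have := sum_count_mul_le_mgPlay m hdiag (hPQ v ▸ hleg) (hvQ v)
          rwa [← hPQ v, hplay] at this

lemma sum_count_add_mgLaterDeg {t : V → ℕ} (htie : ∀ u v, 0 < m u v → t u ≠ t v)
    {P Q : List V} {v : V} (hnodup : (P ++ v :: Q).Nodup)
    (hsorted : (P ++ v :: Q).Pairwise (fun a b => t a ≤ t b)) (hmem : ∀ u, u ∈ P ++ v :: Q) :
    ∑ u, (P.count u : ℤ) * m u v + mgLaterDeg m t v = ∑ u, (m u v : ℤ) := by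
  rw [mgLaterDeg, sum_filter, ← sum_add_distrib]
  refine sum_congr rfl fun u _ => ?_
  rcases Nat.eq_zero_or_pos (m u v) with h0 | hpos
  · simp [h0]
  have htuv := htie u v hpos
  have hmemu := hmem u
  simp only [List.pairwise_append, List.pairwise_cons, List.mem_cons, List.mem_append]
    at hsorted hmemu
  obtain ⟨-, ⟨hvQ, -⟩, hPvQ⟩ := hsorted
  rcases lt_or_gt_of_ne htuv with hlt | hgt
  · have huP : u ∈ P := by
      rcases hmemu with h | rfl | h
      · exact h
      · exact absurd rfl htuv
      · exact absurd (hvQ u h) (not_le.2 hlt)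
    simp [List.count_eq_one_of_mem (List.nodup_append.1 hnodup).1 huP, not_lt.2 hlt.le]
  · have huP : u ∉ P := fun h => absurd (hPvQ u h v (Or.inl rfl)) (not_le.2 hgt)
    simp [List.count_eq_zero.2 huP, hgt]

lemma mgRecurrent_of_mgIsFiringOrder [Nonempty V] (hsym : ∀ u v, m u v = m v u)
    (hdiag : ∀ v, m v v = 0) {f : V → ℤ} {t : V → ℕ} (ht : mgIsFiringOrder m f t) :
    mgRecurrent m f := by
  set L := univ.toList.mergeSort (fun a b => t a ≤ t b)
  have hperm : L.Perm univ.toList := List.mergeSort_perm ..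
  have hnodup : L.Nodup := hperm.nodup_iff.2 (nodup_toList _)
  have hmem : ∀ v, v ∈ L := fun v => hperm.mem_iff.2 (mem_toList.2 (mem_univ v))
  have hsorted : L.Pairwise (fun a b => t a ≤ t b) := by
    simpa using List.pairwise_mergeSort (le := fun a b => decide (t a ≤ t b))
      (fun a b c hab hbc => by simp only [decide_eq_true_eq] at *; omega)
      (fun a b => by simp only [Bool.or_eq_true, decide_eq_true_eq]; omega) univ.toList
  have hdeg : ∀ v, (mgDeg m v : ℤ) = ∑ u, (m u v : ℤ) := fun v => by simp [mgDeg, hsym v]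
  refine ⟨L, List.ne_nil_of_mem (hmem (Classical.arbitrary V)), (mgLegal_iff m f L).2 ?_, ?_⟩
  · intro P v Q hL
    rw [hL] at hnodup hsorted hmem
    have hvP : v ∉ P := by simpa using (List.nodup_append.1 hnodup).2.2 v
    rw [mgPlay_apply_s11 m hdiag, List.count_eq_zero.2 hvP, Nat.cast_zero, zero_mul, sub_zero]
    linarith [sum_count_add_mgLaterDeg m ht.1 hnodup hsorted hmem, ht.2 v, hdeg v]
  · funext v
    rw [mgPlay_apply_s11 m hdiag, hdeg]
    simp [List.count_eq_one_of_mem hnodup (hmem _)]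

omit [DecidableEq V] in
lemma card_ne_zero_le_mgDegDiv {f : V → ℤ} (hf : mgEffective f) :
    (#{v | f v ≠ 0} : ℤ) ≤ mgDegDiv f := by
  rw [mgDegDiv, ← sum_filter_ne_zero, card_eq_sum_ones, Nat.cast_sum, Nat.cast_one]
  refine sum_le_sum fun v hv => ?_
  have := hf v
  have := (mem_filter.1 hv).2
  omega

end ChipFiring

section Activation

variable (G : SimpleGraph V) [DecidableRel G.Adj] (τ : V → ℕ)

lemma tssStep_iterate_mono (S : Finset V) : Monotone fun n => (tssStep G τ)^[n] S :=
  monotone_nat_of_le_succ fun n => by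
    rw [Function.iterate_succ_apply']
    exact subset_union_left

lemma tssIsTargetSet_iff {S : Finset V} :
    tssIsTargetSet G τ S ↔ ∃ r : V → ℕ, ∀ v ∉ S,
      τ v ≤ #{u ∈ G.neighborFinset v | u ∈ S ∨ r u < r v} := by
  set A := fun n => (tssStep G τ)^[n] S
  have hA : Monotone A := tssStep_iterate_mono G τ S
  have hsucc : ∀ n, A (n + 1) = tssStep G τ (A n) := fun n => Function.iterate_succ_apply' ..
  constructor
  · rintro ⟨n, hn⟩
    have hex : ∀ v, ∃ k, v ∈ A k := fun v => ⟨n, by simp [A, hn]⟩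
    refine ⟨fun v => Nat.find (hex v), fun v hv => ?_⟩
    obtain ⟨k, hk⟩ : ∃ k, Nat.find (hex v) = k + 1 :=
      Nat.exists_eq_succ_of_ne_zero fun h => hv (by simpa [h, A] using Nat.find_spec (hex v))
    have hmem := Nat.find_spec (hex v)
    rw [hk, hsucc] at hmem
    rcases mem_union.1 hmem with h | h
    · exact absurd h (Nat.find_min (hex v) (by omega))
    refine (mem_filter.1 h).2.trans (card_le_card fun u hu => ?_)
    simp only [mem_filter, SimpleGraph.mem_neighborFinset] at hu ⊢
    exact ⟨hu.2, Or.inr (by rw [hk]; exact Nat.lt_succ_of_le (Nat.find_min' _ hu.1))⟩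
  · rintro ⟨r, hr⟩
    have active : ∀ k v, r v = k → v ∈ A (k + 1) := by
      intro k
      induction k using Nat.strong_induction_on with
      | _ k ih =>
        intro v hv
        by_cases hvS : v ∈ S
        · exact hA (Nat.zero_le _) hvS
        rw [hsucc]
        refine mem_union_right _ (mem_filter.2 ⟨mem_univ v,
          (hr v hvS).trans (card_le_card fun u hu => ?_)⟩)
        simp only [mem_filter, SimpleGraph.mem_neighborFinset] at hu ⊢
        rcases hu with ⟨hadj, huS | hlt⟩
        · exact ⟨hA (Nat.zero_le _) huS, hadj⟩
        · exact ⟨hA (by omega) (ih _ (hv ▸ hlt) u rfl), hadj⟩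
    refine ⟨univ.sup r + 1, eq_univ_of_forall fun v => ?_⟩
    exact hA (by simpa using le_sup (mem_univ v)) (active _ v rfl)

end Activation

namespace Cons

variable {G : SimpleGraph V} [DecidableRel G.Adj] {N : ℕ}

-- The vertices `v_i`, `v_c`, `v_o` and `p_{uv}` of `G'`.
abbrev inV (v : V) : (V ⊕ V ⊕ V) ⊕ G.Dart := .inl (.inl v)
abbrev ctrV (v : V) : (V ⊕ V ⊕ V) ⊕ G.Dart := .inl (.inr (.inl v))
abbrev outV (v : V) : (V ⊕ V ⊕ V) ⊕ G.Dart := .inl (.inr (.inr v))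
abbrev dartV (d : G.Dart) : (V ⊕ V ⊕ V) ⊕ G.Dart := .inr d

def owner : (V ⊕ V ⊕ V) ⊕ G.Dart → V
  | .inl (.inl v) | .inl (.inr (.inl v)) | .inl (.inr (.inr v)) => v
  | .inr d => d.toProd.1

omit [Fintype V] in
variable (G N) in
lemma consM_comm (a b : (V ⊕ V ⊕ V) ⊕ G.Dart) : consM G N a b = consM G N b a :=
  Nat.add_comm ..

omit [Fintype V] in
variable (G N) in
lemma consM_self (a : (V ⊕ V ⊕ V) ⊕ G.Dart) : consM G N a a = 0 := by
  rcases a with (v | v | v) | d <;> rfl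

omit [Fintype V] in
lemma consM_connected (hG : G.Connected) (hN : 0 < N) : mgConnected (consM G N) := by
  let R a b := 0 < consM G N a b
  have : Std.Symm R := ⟨fun a b h => by simpa [R, consM_comm] using h⟩
  have symm {a b} (h : Relation.ReflTransGen R a b) : Relation.ReflTransGen R b a :=
    Relation.ReflTransGen.stdSymm.symm _ _ h
  have in_ctr (v : V) : R (inV v) (ctrV v) := by simp [R, consM, consAux, hN]
  have ctr_out (v : V) : R (ctrV v) (outV v) := by simp [R, consM, consAux]
  have out_dart (d : G.Dart) : R (outV d.toProd.1) (dartV d) := by simp [R, consM, consAux, hN]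
  have dart_in (d : G.Dart) : R (dartV d) (inV d.toProd.2) := by simp [R, consM, consAux]
  have to_inV : ∀ a, ∃ v, Relation.ReflTransGen R a (inV v) := by
    rintro ((v | v | v) | d)
    · exact ⟨v, .refl⟩
    · exact ⟨v, symm (.single (in_ctr v))⟩
    · exact ⟨v, symm (.head (in_ctr v) (.single (ctr_out v)))⟩
    · exact ⟨d.toProd.2, .single (dart_in d)⟩
  have walk {v w : V} (p : G.Walk v w) : Relation.ReflTransGen R (inV v) (inV w) := by
    induction p with
    | nil => exact .refl
    | @cons u w _ huw _ ih =>
      let d : G.Dart := ⟨(u, w), huw⟩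
      exact .head (in_ctr u) (.head (ctr_out u) (.head (out_dart d) (.head (dart_in d) ih)))
  intro a b
  obtain ⟨v, hav⟩ := to_inV a
  obtain ⟨w, hbw⟩ := to_inV b
  exact hav.trans ((walk (hG.preconnected v w).some).trans (symm hbw))

variable (G) in
lemma card_dart_snd_filter (v : V) (P : V → Prop) [DecidablePred P] :
    #{d : G.Dart | d.toProd.2 = v ∧ P d.toProd.1} = #{u ∈ G.neighborFinset v | P u} := by
  refine card_nbij (fun d => d.toProd.1) ?_ ?_ ?_
  · intro d hd
    simp only [mem_coe, mem_filter, mem_univ, true_and,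
      SimpleGraph.mem_neighborFinset] at hd ⊢
    exact ⟨hd.1 ▸ d.adj.symm, hd.2⟩
  · intro d hd e he h
    simp only [mem_coe, mem_filter, mem_univ, true_and] at hd he
    exact SimpleGraph.Dart.ext _ _ (Prod.ext h (hd.1.trans he.1.symm))
  · intro u hu
    simp only [mem_coe, mem_filter, SimpleGraph.mem_neighborFinset] at hu
    exact ⟨⟨(u, v), hu.1.symm⟩, by simpa using hu.2, rfl⟩

variable (G) in
lemma card_dart_snd_eq_degree (v : V) : #{d : G.Dart | d.toProd.2 = v} = G.degree v := by
  simpa using card_dart_snd_filter G v fun _ => True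

section

variable (t : (V ⊕ V ⊕ V) ⊕ G.Dart → ℕ)

lemma mgLaterDeg_inV (v : V) :
    mgLaterDeg (consM G N) t (inV v) = (if t (inV v) < t (ctrV v) then (N : ℤ) else 0)
      + #{d : G.Dart | d.toProd.2 = v ∧ t (inV v) < t (dartV d)} := by
  simp only [mgLaterDeg, consM, consAux, sum_filter, Fintype.sum_sum_type, Nat.cast_add,
    Nat.cast_ite, Nat.cast_one, CharP.cast_eq_zero, zero_add, add_zero, ite_self, sum_const_zero]
  -- test the equality first, so that `sum_ite_eq` evaluates the sums
  simp only [← ite_and]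
  simp only [and_comm (a := _ < _), ite_and]
  simp [← sum_filter, filter_filter]

lemma mgLaterDeg_ctrV (v : V) :
    mgLaterDeg (consM G N) t (ctrV v) = (if t (ctrV v) < t (inV v) then (N : ℤ) else 0)
      + if t (ctrV v) < t (outV v) then 1 else 0 := by
  simp only [mgLaterDeg, consM, consAux, sum_filter, Fintype.sum_sum_type, Nat.cast_add,
    Nat.cast_ite, Nat.cast_one, CharP.cast_eq_zero, zero_add, add_zero, ite_self, sum_const_zero]
  simp only [← ite_and]
  simp only [and_comm (a := _ < _), ite_and]
  simp

lemma mgLaterDeg_outV (v : V) :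
    mgLaterDeg (consM G N) t (outV v) = (if t (outV v) < t (ctrV v) then 1 else 0)
      + #{d : G.Dart | d.toProd.1 = v ∧ t (outV v) < t (dartV d)} * N := by
  simp only [mgLaterDeg, consM, consAux, sum_filter, Fintype.sum_sum_type, Nat.cast_add,
    Nat.cast_ite, Nat.cast_one, CharP.cast_eq_zero, zero_add, add_zero, ite_self, sum_const_zero]
  simp only [← ite_and]
  simp only [and_comm (a := _ < _), ite_and]
  simp [← sum_filter, filter_filter]

lemma mgLaterDeg_dartV (d : G.Dart) :
    mgLaterDeg (consM G N) t (dartV d)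
      = (if t (dartV d) < t (outV d.toProd.1) then (N : ℤ) else 0)
      + if t (dartV d) < t (inV d.toProd.2) then 1 else 0 := by
  simp only [mgLaterDeg, consM, consAux, sum_filter, Fintype.sum_sum_type, Nat.cast_add,
    Nat.cast_ite, Nat.cast_one, CharP.cast_eq_zero, zero_add, add_zero, ite_self, sum_const_zero]
  simp only [← ite_and]
  simp only [and_comm (a := _ < _), ite_and]
  simp [add_comm]

end

variable {τ : V → ℕ}

-- A gadget of `v ∉ S` fires in the slots `4 r v + 2, …, 4 r v + 5`; a gadget of `v ∈ S` fires
-- `v_o` and its darts before all others and `v_i`, `v_c` after all others (given `r ≤ M`).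
def schedule (S : Finset V) (r : V → ℕ) (M : ℕ) : (V ⊕ V ⊕ V) ⊕ G.Dart → ℕ
  | .inl (.inl v) => if v ∈ S then 4 * M + 6 else 4 * r v + 2
  | .inl (.inr (.inl v)) => if v ∈ S then 4 * M + 7 else 4 * r v + 3
  | .inl (.inr (.inr v)) => if v ∈ S then 0 else 4 * r v + 4
  | .inr d => if d.toProd.1 ∈ S then 1 else 4 * r d.toProd.1 + 5

omit [Fintype V] in
lemma schedule_ne_of_consM_pos (S : Finset V) (r : V → ℕ) (M : ℕ)
    (a b : (V ⊕ V ⊕ V) ⊕ G.Dart) (h : 0 < consM G N a b) :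
    schedule S r M a ≠ schedule S r M b := by
  rcases a with (a | a | a) | d <;> rcases b with (b | b | b) | e <;>
    simp only [consM, consAux, zero_add, add_zero, lt_self_iff_false] at h <;>
    split_ifs at h with hab <;> (try omega) <;> subst hab <;>
    simp only [schedule] <;> split_ifs <;> omega

def outChips (S : Finset V) : (V ⊕ V ⊕ V) ⊕ G.Dart → ℤ
  | .inl (.inr (.inr v)) => if v ∈ S then 1 else 0
  | _ => 0

lemma mgDegDiv_outChips (S : Finset V) : mgDegDiv (outChips (G := G) S) = #S := by
  simp [mgDegDiv, Fintype.sum_sum_type, outChips]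

lemma mgLaterDeg_schedule_inV_le (hτ : ∀ v, τ v ≤ G.degree v) {S : Finset V} {r : V → ℕ}
    (hr : ∀ v ∉ S, τ v ≤ #{u ∈ G.neighborFinset v | u ∈ S ∨ r u < r v}) (v : V) :
    mgLaterDeg (consM G N) (schedule S r (univ.sup r)) (inV v)
      ≤ consX G τ N (inV v) := by
  set t := schedule (G := G) S r (univ.sup r)
  rw [mgLaterDeg_inV, consX]
  by_cases hvS : v ∈ S
  · have hnone : #{d : G.Dart | d.toProd.2 = v ∧ t (inV v) < t (dartV d)} = 0 := by
      refine card_eq_zero.2 (filter_eq_empty_iff.2 fun d _ ⟨_, h⟩ => ?_)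
      have : r d.toProd.1 ≤ univ.sup r := le_sup (mem_univ _)
      simp only [t, schedule, if_pos hvS] at h
      split_ifs at h <;> omega
    have := hτ v
    rw [hnone]
    split_ifs <;> omega
  · have hlate : #{d : G.Dart | d.toProd.2 = v ∧ t (inV v) < t (dartV d)}
        ≤ #{u ∈ G.neighborFinset v | ¬ (u ∈ S ∨ r u < r v)} := by
      refine (card_le_card (monotone_filter_right _ fun d _ ⟨hd, h⟩ => ⟨hd, ?_⟩)).trans_eq
        (card_dart_snd_filter G v fun u => ¬ (u ∈ S ∨ r u < r v))
      simp only [t, schedule, if_neg hvS] at h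
      split_ifs at h with hdS
      · omega
      · exact not_or.2 ⟨hdS, by omega⟩
    have hsplit := card_filter_add_card_filter_not (s := G.neighborFinset v)
      (fun u => u ∈ S ∨ r u < r v)
    rw [SimpleGraph.card_neighborFinset_eq_degree] at hsplit
    have := hr v hvS
    rw [if_pos (by simp [t, schedule, hvS])]
    omega

lemma mgIsFiringOrder_schedule (hτ : ∀ v, τ v ≤ G.degree v) {S : Finset V} {r : V → ℕ}
    (hr : ∀ v ∉ S, τ v ≤ #{u ∈ G.neighborFinset v | u ∈ S ∨ r u < r v}) :
    mgIsFiringOrder (consM G N) (consX G τ N + outChips S) (schedule S r (univ.sup r)) := by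
  set t := schedule (G := G) S r (univ.sup r)
  refine ⟨schedule_ne_of_consM_pos S r _, ?_⟩
  rintro ((v | v | v) | d)
  · simpa [outChips] using mgLaterDeg_schedule_inV_le hτ hr v
  · rw [mgLaterDeg_ctrV]
    simp only [t, schedule, consX, outChips, Pi.add_apply]
    split_ifs <;> omega
  · rw [mgLaterDeg_outV]
    have hcard : #{d : G.Dart | d.toProd.1 = v ∧ t (outV v) < t (dartV d)} ≤ G.degree v := by
      rw [← G.dart_fst_fiber_card_eq_degree v]
      exact card_le_card (monotone_filter_right _ fun d _ h => h.1)
    have := mul_le_mul_of_nonneg_right (Nat.cast_le (α := ℤ).2 hcard) (Nat.cast_nonneg N)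
    simp only [consX, outChips, Pi.add_apply]
    by_cases hvS : v ∈ S
    · rw [if_pos hvS]
      split_ifs <;> linarith
    · rw [if_neg (by simp [t, schedule, hvS]), if_neg hvS]
      linarith
  · rw [mgLaterDeg_dartV]
    simp only [t, schedule, consX, outChips, Pi.add_apply]
    split_ifs <;> omega

section

variable {g : (V ⊕ V ⊕ V) ⊕ G.Dart → ℤ} {t : (V ⊕ V ⊕ V) ⊕ G.Dart → ℕ}

lemma inV_lt_ctrV (hN : 2 ≤ N) (ht : mgIsFiringOrder (consM G N) (consX G τ N + g) t) {v : V}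
    (hc : g (ctrV v) = 0) : t (inV v) < t (ctrV v) := by
  have hlater := ht.2 (ctrV v)
  have hne := ht.1 (inV v) (ctrV v) (by simp only [consM, consAux, ↓reduceIte, add_zero]; omega)
  rw [mgLaterDeg_ctrV] at hlater
  simp only [consX, Pi.add_apply, hc] at hlater
  split_ifs at hlater <;> omega

lemma outV_lt_dartV (hN : 2 ≤ N) (ht : mgIsFiringOrder (consM G N) (consX G τ N + g) t)
    {d : G.Dart} (hd : g (dartV d) = 0) : t (outV d.toProd.1) < t (dartV d) := by
  have hlater := ht.2 (dartV d)
  have hne := ht.1 (outV d.toProd.1) (dartV d)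
    (by simp only [consM, consAux, ↓reduceIte, add_zero]; omega)
  rw [mgLaterDeg_dartV] at hlater
  simp only [consX, Pi.add_apply, hd] at hlater
  split_ifs at hlater <;> omega

lemma ctrV_lt_outV (hN : 2 ≤ N) (ht : mgIsFiringOrder (consM G N) (consX G τ N + g) t) {v : V}
    (ho : g (outV v) = 0) (hd : ∀ d : G.Dart, d.toProd.1 = v → g (dartV d) = 0) :
    t (ctrV v) < t (outV v) := by
  have hall : #{d : G.Dart | d.toProd.1 = v ∧ t (outV v) < t (dartV d)} = G.degree v := by
    rw [← G.dart_fst_fiber_card_eq_degree v]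
    refine congrArg _ (filter_congr fun d _ => and_iff_left_of_imp fun h => ?_)
    exact h ▸ outV_lt_dartV hN ht (hd d h)
  have hlater := ht.2 (outV v)
  have hne := ht.1 (ctrV v) (outV v) (by simp [consM, consAux])
  rw [mgLaterDeg_outV, hall] at hlater
  simp only [consX, Pi.add_apply, ho] at hlater
  split_ifs at hlater <;> [linarith; omega]

lemma inV_lt_dartV (hN : 2 ≤ N) (ht : mgIsFiringOrder (consM G N) (consX G τ N + g) t)
    {d : G.Dart} (hfree : ∀ z, owner z = d.toProd.1 → g z = 0) :
    t (inV d.toProd.1) < t (dartV d) :=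
  calc t (inV d.toProd.1) < t (ctrV d.toProd.1) := inV_lt_ctrV hN ht (hfree _ rfl)
    _ < t (outV d.toProd.1) := ctrV_lt_outV hN ht (hfree _ rfl) fun _ he => hfree _ he
    _ < t (dartV d) := outV_lt_dartV hN ht (hfree _ rfl)

lemma le_card_dartV_lt_inV (hN : 2 ≤ N) (ht : mgIsFiringOrder (consM G N) (consX G τ N + g) t)
    {v : V} (hi : g (inV v) = 0) (hc : g (ctrV v) = 0) :
    τ v ≤ #{d : G.Dart | d.toProd.2 = v ∧ t (dartV d) < t (inV v)} := by
  have hsplit : #{d : G.Dart | d.toProd.2 = v ∧ t (inV v) < t (dartV d)}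
      + #{d : G.Dart | d.toProd.2 = v ∧ t (dartV d) < t (inV v)} = G.degree v := by
    have hearlier : #{d : G.Dart | d.toProd.2 = v ∧ t (dartV d) < t (inV v)}
        = #{d : G.Dart | d.toProd.2 = v ∧ ¬ t (inV v) < t (dartV d)} := by
      refine congrArg _ (filter_congr fun d _ => and_congr_right fun hd => ?_)
      have := ht.1 (dartV d) (inV v) (by simp [consM, consAux, hd])
      omega
    rw [hearlier, ← card_dart_snd_eq_degree,
      ← card_filter_add_card_filter_not (s := {d : G.Dart | d.toProd.2 = v})
        fun d => t (inV v) < t (dartV d)]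
    simp only [filter_filter]
  have hlater := ht.2 (inV v)
  rw [mgLaterDeg_inV, if_pos (inV_lt_ctrV hN ht hc)] at hlater
  simp only [consX, Pi.add_apply, hi] at hlater
  omega

end

lemma exists_mgRecurrent_of_tssIsTargetSet [Nonempty V] (hτ : ∀ v, τ v ≤ G.degree v)
    {S : Finset V} (hS : tssIsTargetSet G τ S) :
    ∃ g, mgEffective g ∧ mgDegDiv g = #S ∧ mgRecurrent (consM G N) (consX G τ N + g) := by
  obtain ⟨r, hr⟩ := (tssIsTargetSet_iff G τ).1 hS
  refine ⟨outChips S, fun z => ?_, mgDegDiv_outChips S,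
    mgRecurrent_of_mgIsFiringOrder _ (consM_comm G N) (consM_self G N)
      (mgIsFiringOrder_schedule hτ hr)⟩
  rcases z with (v | v | v) | d <;> simp [outChips, ite_nonneg]

lemma exists_tssIsTargetSet_of_mgRecurrent (hG : G.Connected) (hN : 2 ≤ N)
    {g : (V ⊕ V ⊕ V) ⊕ G.Dart → ℤ} (hg : mgEffective g)
    (hrec : mgRecurrent (consM G N) (consX G τ N + g)) :
    ∃ S : Finset V, tssIsTargetSet G τ S ∧ (#S : ℤ) ≤ mgDegDiv g := by
  obtain ⟨t, ht⟩ := exists_mgIsFiringOrder_of_mgRecurrent _ (consM_self G N)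
    (consM_connected hG (by omega)) hrec
  set S := ({z | g z ≠ 0} : Finset _).image owner
  have hfree : ∀ v ∉ S, ∀ z, owner z = v → g z = 0 := fun v hv z hz => by
    by_contra h
    exact hv (mem_image.2 ⟨z, by simpa using h, hz⟩)
  refine ⟨S, (tssIsTargetSet_iff G τ).2 ⟨fun v => t (inV v), fun v hv => ?_⟩, ?_⟩
  · calc τ v ≤ #{d : G.Dart | d.toProd.2 = v ∧ t (dartV d) < t (inV v)} :=
          le_card_dartV_lt_inV hN ht (hfree v hv _ rfl) (hfree v hv _ rfl)
      _ ≤ #{d : G.Dart | d.toProd.2 = v ∧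
            (d.toProd.1 ∈ S ∨ t (inV d.toProd.1) < t (inV v))} :=
          card_le_card (monotone_filter_right _ fun d _ ⟨hd, h⟩ =>
            ⟨hd, or_iff_not_imp_left.2 fun hS => (inV_lt_dartV hN ht (hfree _ hS)).trans h⟩)
      _ = _ := card_dart_snd_filter G v fun u => u ∈ S ∨ t (inV u) < t (inV v)
  · calc (#S : ℤ) ≤ #{z | g z ≠ 0} := Nat.cast_le.2 card_image_le
      _ ≤ mgDegDiv g := card_ne_zero_le_mgDegDiv hg

end Cons

/-- `ts_G(τ) = dist_rec_{G'}(x)` for the standard construction (on a connected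
simple graph `G`) with `N = |V| + 2`. -/
theorem stmt11 [Nonempty V] (G : SimpleGraph V) [DecidableRel G.Adj]
    (hconn : G.Connected) (τ : V → ℕ) (hτ : ∀ v, τ v ≤ G.degree v) :
    tssMin G τ =
      mgDistRec (consM G (Fintype.card V + 2)) (consX G τ (Fintype.card V + 2)) := by
  set N := Fintype.card V + 2
  obtain ⟨S, hS, hScard⟩ : tssMin G τ ∈ {k | ∃ S, tssIsTargetSet G τ S ∧ #S = k} :=
    Nat.sInf_mem ⟨_, univ, ⟨0, rfl⟩, rfl⟩
  obtain ⟨g, hg, hgdeg, hgrec⟩ := Cons.exists_mgRecurrent_of_tssIsTargetSet (N := N) hτ hS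
  obtain ⟨g', hg', hg'deg, hg'rec⟩ : mgDistRec (consM G N) (consX G τ N) ∈ {n : ℕ | ∃ g,
      mgEffective g ∧ mgDegDiv g = n ∧ mgRecurrent (consM G N) (consX G τ N + g)} :=
    Nat.sInf_mem ⟨_, g, hg, hgdeg, hgrec⟩
  obtain ⟨S', hS', hS'card⟩ :=
    Cons.exists_tssIsTargetSet_of_mgRecurrent hconn (by omega) hg' hg'rec
  refine le_antisymm ?_ (Nat.sInf_le ⟨g, hg, hScard ▸ hgdeg, hgrec⟩)
  have hmin : tssMin G τ ≤ #S' := Nat.sInf_le ⟨S', hS', rfl⟩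
  omega
end
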